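/- Let μ ∈ ℝ, σ > 0 and ξ ≠ 0, and let x be in the interior of the support D; write z = (x−μ)/σ. Then the negative second partial derivative of log f(x; μ,σ,ξ) with respect to σ twice equals (1/σ²) · z · t(x)^{−1/ξ − 2} · ((1−ξ)z − 2) + (1/σ²) · t(x)^{−2} · (ξz² + 2z − 1). -/

import Mathlib

open Real

/-- The Generalized Extreme-Value (GEV) density with shape `ξ ≠ 0`. -/
noncomputable def gevDensity (μ σ ξ x : ℝ) : ℝ :=
  if 0 < 1 + ξ * ((x - μ) / σ) then
    σ⁻¹ * (1 + ξ * ((x - μ) / σ)) ^ (-(ξ + 1) / ξ) *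
      Real.exp (-((1 + ξ * ((x - μ) / σ)) ^ (-1 / ξ)))
  else 0

/-!
Near any scale `s ≠ 0` with `t(s) = 1 + ξ (x - μ) / s > 0` the log-density is
`-log s - (1 + 1/ξ) log t(s) - t(s)^(-1/ξ)`, so both derivatives in the scale are computed
termwise from `t'(s) = -ξ (x - μ) / s²`. Writing `t^(-1/ξ - 1) = t^(-1/ξ - 2) · t` then turns
the claimed formula into an identity between rational functions of `σ`, `z = (x - μ) / σ` and
`t^(-1/ξ - 2)`.
-/

open Filter Topology

section OneAddMulDiv

variable (a c : ℝ) {s : ℝ}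

lemma hasDerivAt_one_add_mul_div (hs : s ≠ 0) :
    HasDerivAt (fun s' : ℝ => 1 + a * (c / s')) (-(a * c) / s ^ 2) s := by
  simp_rw [mul_div_assoc', div_eq_mul_inv]
  exact (((hasDerivAt_inv hs).const_mul _).const_add 1).congr_deriv (by ring)

lemma eventually_ne_zero_and_one_add_mul_div_pos (hs : s ≠ 0) (ht : 0 < 1 + a * (c / s)) :
    ∀ᶠ s' in 𝓝 s, s' ≠ 0 ∧ 0 < 1 + a * (c / s') :=
  (eventually_ne_nhds hs).and
    ((hasDerivAt_one_add_mul_div a c hs).continuousAt.eventually (lt_mem_nhds ht))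

end OneAddMulDiv

section GEV

variable {μ ξ x : ℝ}

/-- `∂/∂σ log f(x; μ, s, ξ)` on the support. -/
noncomputable def gevScaleScore (μ ξ x s : ℝ) : ℝ :=
  -s⁻¹ + (ξ + 1) * (x - μ) * ((s ^ 2)⁻¹ * (1 + ξ * ((x - μ) / s))⁻¹)
    - (x - μ) * ((s ^ 2)⁻¹ * (1 + ξ * ((x - μ) / s)) ^ (-1 / ξ - 1))

lemma log_gevDensity {σ : ℝ} (hσ : σ ≠ 0) (ht : 0 < 1 + ξ * ((x - μ) / σ)) :
    log (gevDensity μ σ ξ x) = -log σ + (-(ξ + 1) / ξ) * log (1 + ξ * ((x - μ) / σ))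
      - (1 + ξ * ((x - μ) / σ)) ^ (-1 / ξ) := by
  have htp : (1 + ξ * ((x - μ) / σ)) ^ (-(ξ + 1) / ξ) ≠ 0 := (rpow_pos_of_pos ht _).ne'
  rw [gevDensity, if_pos ht, log_mul (mul_ne_zero (inv_ne_zero hσ) htp) (exp_ne_zero _),
    log_mul (inv_ne_zero hσ) htp, log_inv, log_rpow ht, log_exp]
  ring

lemma hasDerivAt_log_gevDensity (hξ : ξ ≠ 0) {s : ℝ} (hs : s ≠ 0)
    (ht : 0 < 1 + ξ * ((x - μ) / s)) :
    HasDerivAt (fun s' : ℝ => log (gevDensity μ s' ξ x)) (gevScaleScore μ ξ x s) s := by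
  have hT := hasDerivAt_one_add_mul_div ξ (x - μ) hs
  have hclosed := ((hasDerivAt_log hs).neg.add ((hT.log ht.ne').const_mul (-(ξ + 1) / ξ))).sub
    (hT.rpow_const (p := -1 / ξ) (Or.inl ht.ne'))
  have hlog_eq : (fun s' : ℝ => log (gevDensity μ s' ξ x)) =ᶠ[𝓝 s] fun s' =>
      -log s' + (-(ξ + 1) / ξ) * log (1 + ξ * ((x - μ) / s'))
        - (1 + ξ * ((x - μ) / s')) ^ (-1 / ξ) := by
    filter_upwards [eventually_ne_zero_and_one_add_mul_div_pos ξ (x - μ) hs ht]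
      with s' ⟨hs', ht'⟩
    exact log_gevDensity hs' ht'
  refine (hclosed.congr_deriv ?_).congr_of_eventuallyEq hlog_eq
  unfold gevScaleScore
  field_simp

lemma hasDerivAt_gevScaleScore (hξ : ξ ≠ 0) {σ : ℝ} (hσ : σ ≠ 0)
    (ht : 0 < 1 + ξ * ((x - μ) / σ)) :
    HasDerivAt (gevScaleScore μ ξ x)
      (-((1 / σ ^ 2) * ((x - μ) / σ) * (1 + ξ * ((x - μ) / σ)) ^ (-1 / ξ - 2) *
          ((1 - ξ) * ((x - μ) / σ) - 2) +
        (1 / σ ^ 2) * ((1 + ξ * ((x - μ) / σ))⁻¹) ^ 2 *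
          (ξ * ((x - μ) / σ) ^ 2 + 2 * ((x - μ) / σ) - 1))) σ := by
  have hT := hasDerivAt_one_add_mul_div ξ (x - μ) hσ
  have hsq : HasDerivAt (fun s : ℝ => (s ^ 2)⁻¹) (-(2 * σ) / (σ ^ 2) ^ 2) σ :=
    ((hasDerivAt_pow 2 σ).inv (pow_ne_zero 2 hσ)).congr_deriv (by norm_num)
  have hfirst := (hasDerivAt_inv hσ).neg
  have hsecond := (hsq.mul (hT.inv ht.ne')).const_mul ((ξ + 1) * (x - μ))
  have hthird := (hsq.mul (hT.rpow_const (p := -1 / ξ - 1) (Or.inl ht.ne'))).const_mul (x - μ)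
  refine HasDerivAt.congr_deriv (f := gevScaleScore μ ξ x) ((hfirst.add hsecond).sub hthird) ?_
  simp only [Pi.inv_apply]
  rw [show -1 / ξ - 1 - 1 = -1 / ξ - 2 by ring, show -1 / ξ - 1 = -1 / ξ - 2 + 1 by ring,
    rpow_add_one ht.ne']
  set z := (x - μ) / σ with hz_def
  have hz : x - μ = z * σ := by rw [hz_def]; field_simp
  rw [hz]
  generalize (1 + ξ * z) ^ (-1 / ξ - 2) = A
  field_simp
  ring

end GEV

/-- With `z = (x-μ)/σ`, the negative second partial derivative of `log f(x; μ,σ,ξ)` with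
respect to `σ` twice equals
`(1/σ²) z t(x)^{-1/ξ-2} ((1-ξ)z - 2) + (1/σ²) t(x)⁻² (ξz² + 2z - 1)`: i.e. the
derivative in `σ` of `s ↦ ∂/∂σ log f(x; μ,s,ξ)` equals the negative of that quantity. -/
theorem stmt_8 (μ σ ξ x : ℝ) (hσ : 0 < σ) (hξ : ξ ≠ 0)
    (hx : 0 < 1 + ξ * ((x - μ) / σ)) :
    HasDerivAt (fun s : ℝ => deriv (fun s' : ℝ => Real.log (gevDensity μ s' ξ x)) s)
      (-((1 / σ ^ 2) * ((x - μ) / σ) * (1 + ξ * ((x - μ) / σ)) ^ (-1 / ξ - 2) *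
          ((1 - ξ) * ((x - μ) / σ) - 2) +
        (1 / σ ^ 2) * ((1 + ξ * ((x - μ) / σ))⁻¹) ^ 2 *
          (ξ * ((x - μ) / σ) ^ 2 + 2 * ((x - μ) / σ) - 1))) σ := by
  refine (hasDerivAt_gevScaleScore hξ hσ.ne' hx).congr_of_eventuallyEq ?_
  filter_upwards [eventually_ne_zero_and_one_add_mul_div_pos ξ (x - μ) hσ.ne' hx]
    with s ⟨hs, ht⟩
  exact (hasDerivAt_log_gevDensity hξ hs ht).deriv
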